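/- arXiv:2002.09873 — 2 statements merged into one kernel-verified Lean document; each statement's English description precedes it below -/
import Mathlib

section
/- Let X be a core compact sober space, S a ∪-basis of X, and P a proper round prime filter on (S, ⊆, ⋐). Setting O = ∪(S \ P), the complement X \ O is an irreducible closed set, and for its dense point x one has P = S_x = {s ∈ S : x ∈ s}. -/
variable {S : Type*} [SemilatticeSup S] [OrderBot S]

/-- A (nonempty) filter: an up-set in which any two elements have a common lower bound. -/
def IsFilt (F : Set S) : Prop :=
  F.Nonempty ∧ (∀ p ∈ F, ∀ q, p ≤ q → q ∈ F) ∧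
    ∀ p ∈ F, ∀ q ∈ F, ∃ t ∈ F, t ≤ p ∧ t ≤ q

/-- A filter is round if every member has a `r`-predecessor in the filter. -/
def IsRound (r : S → S → Prop) (F : Set S) : Prop :=
  ∀ p ∈ F, ∃ t ∈ F, r t p

/-- Primeness: `p ⊔ q ∈ P` implies `p ∈ P` or `q ∈ P`. -/
def IsPrimeFilt (P : Set S) : Prop :=
  ∀ p q, p ⊔ q ∈ P → p ∈ P ∨ q ∈ P

/-- The spectrum: proper round prime filters. -/
def Spec (r : S → S → Prop) : Type _ :=
  {P : Set S // IsFilt P ∧ IsRound r P ∧ IsPrimeFilt P ∧ ⊥ ∉ P}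

/-- The basic open set `Ŝ_p`. -/
def basicOpen (r : S → S → Prop) (p : S) : Set (Spec r) :=
  {P | p ∈ P.1}

instance specTop (r : S → S → Prop) : TopologicalSpace (Spec r) :=
  TopologicalSpace.generateFrom (Set.range (basicOpen r))

/-- Distributivity of `r`. -/
def IsDistrib (r : S → S → Prop) : Prop :=
  ∀ p s t, r p (s ⊔ t) → ∀ p', r p' p →
    ∃ s' t', r s' s ∧ r t' t ∧ p' ≤ s' ⊔ t' ∧ s' ⊔ t' ≤ p

/-- `r` is auxiliary. -/
def IsAux (r : S → S → Prop) : Prop :=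
  (∀ p p' q' q, p ≤ p' → r p' q' → q' ≤ q → r p q) ∧ ∀ p q, r p q → p ≤ q

/-- `r` is interpolative. -/
def IsInterp (r : S → S → Prop) : Prop :=
  ∀ p q, r p q → ∃ s, r p s ∧ r s q

/-- `r` is approximating: `≤` is the lower preorder of `r`. -/
def IsApprox (r : S → S → Prop) : Prop :=
  ∀ p q, p ≤ q ↔ ∀ t, r t p → r t q

/-- `r` is `∨`-preserving. -/
def IsSupPres (r : S → S → Prop) : Prop :=
  ∀ p p' q q', r p' p → r q' q → r (p' ⊔ q') (p ⊔ q)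

/-- `S` with `r` is a `∨`-predomain. -/
def IsPredom (r : S → S → Prop) : Prop :=
  IsAux r ∧ IsApprox r ∧ IsInterp r ∧ IsSupPres r

/-- Ideal: downward closed and closed under pairwise joins. -/
def IsIdl (I : Set S) : Prop :=
  (∀ p ∈ I, ∀ q, q ≤ p → q ∈ I) ∧ ∀ p ∈ I, ∀ q ∈ I, p ⊔ q ∈ I

/-- The way-below relation on subsets of a topological space:
every open cover of `q` has a finite subcover of `p`. -/
def WayBelow {X : Type*} [TopologicalSpace X] (p q : Set X) : Prop :=
  ∀ C : Set (Set X), (∀ U ∈ C, IsOpen U) → q ⊆ ⋃₀ C →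
    ∃ F ⊆ C, F.Finite ∧ p ⊆ ⋃₀ F

/-- Core compactness. -/
def CoreCompact (X : Type*) [TopologicalSpace X] : Prop :=
  ∀ (x : X) (U : Set X), IsOpen U → x ∈ U → ∃ V, IsOpen V ∧ x ∈ V ∧ WayBelow V U

/-- A `∪`-basis: a basis containing `∅` and closed under pairwise unions. -/
def IsUnionBasis {X : Type*} [TopologicalSpace X] (B : Set (Set X)) : Prop :=
  TopologicalSpace.IsTopologicalBasis B ∧ ∅ ∈ B ∧ ∀ p ∈ B, ∀ q ∈ B, p ∪ q ∈ B

/-- A filter on a `∪`-basis `B`. -/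
def BFilt {X : Type*} [TopologicalSpace X] (B : Set (Set X)) (P : Set (Set X)) : Prop :=
  P.Nonempty ∧ P ⊆ B ∧ (∀ p ∈ P, ∀ q ∈ B, p ⊆ q → q ∈ P) ∧
    ∀ p ∈ P, ∀ q ∈ P, ∃ t ∈ P, t ⊆ p ∧ t ⊆ q

/-- The spectrum of a `∪`-basis `B` with `⊆` as order and way-below `⋐` as `≺`:
proper round prime filters on `B`. -/
def BSpec {X : Type*} [TopologicalSpace X] (B : Set (Set X)) : Type _ :=
  {P : Set (Set X) // BFilt B P ∧ (∀ p ∈ P, ∃ t ∈ P, WayBelow t p) ∧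
    (∀ p ∈ B, ∀ q ∈ B, p ∪ q ∈ P → p ∈ P ∨ q ∈ P) ∧ ∅ ∉ P}

def bBasic {X : Type*} [TopologicalSpace X] (B : Set (Set X)) (p : Set X) :
    Set (BSpec B) := {P | p ∈ P.1}

instance bSpecTop {X : Type*} [TopologicalSpace X] (B : Set (Set X)) :
    TopologicalSpace (BSpec B) :=
  TopologicalSpace.generateFrom (Set.range (bBasic B))

/-!
Let `O = ⋃ (B \ P)`. No member `s` of `P` lies inside `O`: pick `t ∈ P` with `t ⋐ s`; the open
cover `B \ P` of `s` then has a finite subfamily covering `t`, whose union is in `P` by upward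
closure, so by primeness one of its members is in `P`, which is absurd. Hence a basic open set
belongs to `P` exactly when it meets the closed set `Oᶜ`. Directedness of `P` makes `Oᶜ`
irreducible, and its generic point `x` lies in a basic open set iff that set meets `Oᶜ`.
-/

section

variable {X : Type*} [TopologicalSpace X] {B : Set (Set X)}

theorem IsUnionBasis.sUnion_mem (hB : IsUnionBasis B) {F : Set (Set X)} (hF : F.Finite)
    (hFB : F ⊆ B) : ⋃₀ F ∈ B := by
  induction F, hF using Set.Finite.induction_on with
  | empty => simpa using hB.2.1
  | @insert a F _ _ ih =>
    rw [Set.insert_subset_iff] at hFB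
    rw [Set.sUnion_insert]
    exact hB.2.2 a hFB.1 _ (ih hFB.2)

namespace BSpec

theorem exists_mem_of_sUnion_mem (hB : IsUnionBasis B) (P : BSpec B) {F : Set (Set X)}
    (hF : F.Finite) (hFB : F ⊆ B) (hP : ⋃₀ F ∈ P.1) : ∃ u ∈ F, u ∈ P.1 := by
  obtain ⟨-, -, hprime, hempty⟩ := P.2
  induction F, hF using Set.Finite.induction_on with
  | empty => exact absurd (by simpa using hP) hempty
  | @insert a F _ hF ih =>
    rw [Set.insert_subset_iff] at hFB
    rw [Set.sUnion_insert] at hP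
    rcases hprime a hFB.1 _ (hB.sUnion_mem hF hFB.2) hP with ha | hFP
    · exact ⟨a, Set.mem_insert a F, ha⟩
    · obtain ⟨u, hu, huP⟩ := ih hFB.2 hFP
      exact ⟨u, Set.mem_insert_of_mem a hu, huP⟩

theorem not_subset_sUnion_diff (hB : IsUnionBasis B) (P : BSpec B) {s : Set X}
    (hs : s ∈ P.1) : ¬ s ⊆ ⋃₀ (B \ P.1) := by
  obtain ⟨⟨-, -, hup, -⟩, hround, -⟩ := P.2
  intro hsO
  obtain ⟨t, htP, hts⟩ := hround s hs
  obtain ⟨F, hFsub, hF, htF⟩ := hts (B \ P.1) (fun u hu => hB.1.isOpen hu.1) hsO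
  have hFB : F ⊆ B := fun u hu => (hFsub hu).1
  have hFP : ⋃₀ F ∈ P.1 := hup t htP _ (hB.sUnion_mem hF hFB) htF
  obtain ⟨u, hu, huP⟩ := exists_mem_of_sUnion_mem hB P hF hFB hFP
  exact (hFsub hu).2 huP

theorem mem_iff_compl_sUnion_diff_inter_nonempty (hB : IsUnionBasis B) (P : BSpec B)
    {s : Set X} (hsB : s ∈ B) : s ∈ P.1 ↔ ((⋃₀ (B \ P.1))ᶜ ∩ s).Nonempty := by
  refine ⟨fun hs => ?_, fun ⟨x, hxO, hxs⟩ => ?_⟩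
  · obtain ⟨x, hxs, hxO⟩ := Set.not_subset.mp (not_subset_sUnion_diff hB P hs)
    exact ⟨x, hxO, hxs⟩
  · by_contra hs
    exact hxO ⟨s, ⟨hsB, hs⟩, hxs⟩

theorem isIrreducible_compl_sUnion_diff (hB : IsUnionBasis B) (P : BSpec B) :
    IsIrreducible (⋃₀ (B \ P.1))ᶜ := by
  obtain ⟨⟨⟨p, hp⟩, hsub, -, hdir⟩, -⟩ := P.2
  have hmem := fun {s} => mem_iff_compl_sUnion_diff_inter_nonempty hB P (s := s)
  refine ⟨(hmem (hsub hp)).mp hp |>.mono Set.inter_subset_left,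
    fun U V hU hV ⟨x, hxO, hxU⟩ ⟨y, hyO, hyV⟩ => ?_⟩
  obtain ⟨s, hsB, hxs, hsU⟩ := hB.1.exists_subset_of_mem_open hxU hU
  obtain ⟨t, htB, hyt, htV⟩ := hB.1.exists_subset_of_mem_open hyV hV
  obtain ⟨w, hwP, hws, hwt⟩ :=
    hdir s ((hmem hsB).mpr ⟨x, hxO, hxs⟩) t ((hmem htB).mpr ⟨y, hyO, hyt⟩)
  obtain ⟨z, hzO, hzw⟩ := (hmem (hsub hwP)).mp hwP
  exact ⟨z, hzO, hsU (hws hzw), htV (hwt hzw)⟩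

end BSpec

end

theorem stmt5_general {X : Type*} [TopologicalSpace X] [QuasiSober X]
    (B : Set (Set X)) (hB : IsUnionBasis B) (P : BSpec B) :
    IsClosed (⋃₀ (B \ P.1))ᶜ ∧ IsIrreducible (⋃₀ (B \ P.1))ᶜ ∧
      ∃ x, closure {x} = (⋃₀ (B \ P.1))ᶜ ∧ P.1 = {s | s ∈ B ∧ x ∈ s} := by
  have hclosed : IsClosed (⋃₀ (B \ P.1))ᶜ :=
    (isOpen_sUnion fun t ht => hB.1.isOpen ht.1).isClosed_compl
  have hirr := BSpec.isIrreducible_compl_sUnion_diff hB P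
  obtain ⟨x, hx⟩ := QuasiSober.sober hirr hclosed
  have hmem : ∀ s ∈ B, s ∈ P.1 ↔ x ∈ s := fun s hsB =>
    (BSpec.mem_iff_compl_sUnion_diff_inter_nonempty hB P hsB).trans
      (hx.mem_open_set_iff (hB.1.isOpen hsB)).symm
  have hsub : P.1 ⊆ B := P.2.1.2.1
  refine ⟨hclosed, hirr, x, hx.def, Set.ext fun s => ?_⟩
  exact ⟨fun hs => ⟨hsub hs, (hmem s (hsub hs)).mp hs⟩, fun ⟨hsB, hxs⟩ => (hmem s hsB).mpr hxs⟩

theorem stmt5 {X : Type*} [TopologicalSpace X] [QuasiSober X] [T0Space X]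
    (hcc : CoreCompact X) (B : Set (Set X)) (hB : IsUnionBasis B) (P : BSpec B) :
    IsClosed (⋃₀ (B \ P.1))ᶜ ∧ IsIrreducible (⋃₀ (B \ P.1))ᶜ ∧
      ∃ x, closure {x} = (⋃₀ (B \ P.1))ᶜ ∧ P.1 = {s | s ∈ B ∧ x ∈ s} :=
  stmt5_general B hB P
end

section
/- Let S be a ∨-semilattice with minimum 0 and a relation ≺ that is distributive, auxiliary and interpolative. Then the spectrum Ŝ is core compact; indeed every point of Ŝ has a neighbourhood base of compact sets. -/
variable {S : Type*} [SemilatticeSup S] [OrderBot S]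

/-! Around a point `P ∈ Ŝ_p` choose `q ∈ P` with `q ≺ p` and, by interpolation, a chain
`p = z₀ ≻ z₁ ≻ ⋯` staying above `q`; then `Ŝ_q ⊆ ⋂ₙ Ŝ_{zₙ} ⊆ Ŝ_p`, and the middle set is compact.
Given a cover of it by basic opens `Ŝ_b`, either some `zₙ` lies below a finite join of the `b`s,
which yields a finite subcover, or Zorn gives an ideal `J` maximal among those containing all
the `b`s and no `zₙ`. Distributivity, applied along the chain, makes the complement of `J` a
proper round prime filter: a point of `⋂ₙ Ŝ_{zₙ}` that no `Ŝ_b` contains. -/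

open Set TopologicalSpace

theorem isTopologicalBasis_basicOpen (r : S → S → Prop) :
    IsTopologicalBasis (range (basicOpen r)) := by
  refine ⟨?_, ?_, rfl⟩
  · rintro _ ⟨a, rfl⟩ _ ⟨b, rfl⟩ R hR
    obtain ⟨t, htR, hta, htb⟩ := R.2.1.2.2 a hR.1 b hR.2
    exact ⟨basicOpen r t, ⟨t, rfl⟩, htR,
      fun R' ht' => ⟨R'.2.1.2.1 t ht' a hta, R'.2.1.2.1 t ht' b htb⟩⟩
  · refine eq_univ_of_forall fun R => ?_
    obtain ⟨x, hx⟩ := R.2.1.1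
    exact mem_sUnion.2 ⟨basicOpen r x, ⟨x, rfl⟩, hx⟩

theorem basicOpen_mono (r : S → S → Prop) {p q : S} (h : p ≤ q) :
    basicOpen r p ⊆ basicOpen r q :=
  fun R hR => R.2.1.2.1 p hR q h

theorem IsPrimeFilt.exists_mem_of_finset_sup_mem {P : Set S} (hP : IsPrimeFilt P)
    (hbot : (⊥ : S) ∉ P) (F : Finset S) (hF : F.sup id ∈ P) : ∃ b ∈ F, b ∈ P := by
  by_contra! h
  exact Finset.sup_induction (p := (· ∉ P)) hbot
    (fun a ha b hb hab => (hP a b hab).elim ha hb) h hF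

omit [OrderBot S] in
theorem isIdl_sUnion {c : Set (Set S)} (hc : ∀ J ∈ c, IsIdl J) (hchain : IsChain (· ⊆ ·) c) :
    IsIdl (⋃₀ c) := by
  refine ⟨?_, ?_⟩
  · rintro p ⟨J, hJc, hpJ⟩ q hq
    exact ⟨J, hJc, (hc J hJc).1 p hpJ q hq⟩
  · rintro p ⟨J₁, hJ₁, hp⟩ q ⟨J₂, hJ₂, hq⟩
    rcases hchain.total hJ₁ hJ₂ with h | h
    · exact ⟨J₂, hJ₂, (hc J₂ hJ₂).2 p (h hp) q hq⟩
    · exact ⟨J₁, hJ₁, (hc J₁ hJ₁).2 p hp q (h hq)⟩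

omit [SemilatticeSup S] [OrderBot S] in
theorem IsInterp.exists_rel_seq {r : S → S → Prop} (hi : IsInterp r) {p q : S} (hqp : r q p) :
    ∃ z : ℕ → S, z 0 = p ∧ ∀ n, r (z (n + 1)) (z n) ∧ r q (z n) := by
  choose f hf using fun x : {x // r q x} => hi q x x.2
  let g : {x // r q x} → {x // r q x} := fun x => ⟨f x, (hf x).1⟩
  refine ⟨fun n => (g^[n] ⟨p, hqp⟩).1, rfl, fun n => ⟨?_, (g^[n] ⟨p, hqp⟩).2⟩⟩
  show r (g^[n + 1] _).1 _
  rw [Function.iterate_succ_apply']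
  exact (hf _).2

def IsIdlAvoiding (z : ℕ → S) (J : Set S) : Prop :=
  IsIdl J ∧ ∀ n, z n ∉ J

omit [OrderBot S] in
theorem exists_maximal_isIdlAvoiding {z : ℕ → S} {A : Set S} (hA : IsIdlAvoiding z A) :
    ∃ J, A ⊆ J ∧ Maximal (IsIdlAvoiding z) J :=
  zorn_subset_nonempty {J | IsIdlAvoiding z J}
    (fun c hc hchain _ => ⟨⋃₀ c,
      ⟨isIdl_sUnion (fun _ hJ => (hc hJ).1) hchain,
        fun n ⟨_, hJc, hzJ⟩ => (hc hJc).2 n hzJ⟩,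
      fun _ => subset_sUnion_of_mem⟩) A hA

section MaximalAvoiding

variable {r : S → S → Prop} {z : ℕ → S} {J : Set S}

theorem Maximal.exists_le_sup_of_notMem (hJ : Maximal (IsIdlAvoiding z) J) (hbot : ⊥ ∈ J)
    {x : S} (hx : x ∉ J) : ∃ n, ∃ j ∈ J, z n ≤ j ⊔ x := by
  by_contra! h
  have hJ' : IsIdl {v | ∃ j ∈ J, v ≤ j ⊔ x} := by
    refine ⟨fun p ⟨j, hj, hp⟩ q hq => ⟨j, hj, hq.trans hp⟩, ?_⟩
    rintro p ⟨j₁, hj₁, hp⟩ q ⟨j₂, hj₂, hq⟩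
    refine ⟨j₁ ⊔ j₂, hJ.1.1.2 j₁ hj₁ j₂ hj₂, sup_le ?_ ?_⟩
    · exact hp.trans (sup_le_sup_right le_sup_left x)
    · exact hq.trans (sup_le_sup_right le_sup_right x)
  exact hx (hJ.2 ⟨hJ', fun n ⟨j, hj, hle⟩ => h n j hj hle⟩
    (fun v hv => ⟨v, hv, le_sup_left⟩) ⟨⊥, hbot, by simp⟩)

variable (hd : IsDistrib r) (ha : IsAux r) (hz : ∀ n, r (z (n + 1)) (z n))
  (hJ : Maximal (IsIdlAvoiding z) J) (hbot : ⊥ ∈ J)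
include hd ha hz hJ hbot

theorem exists_rel_notMem_le {x : S} (hx : x ∉ J) (N : ℕ) :
    ∃ x', r x' x ∧ x' ∉ J ∧ x' ≤ z N := by
  obtain ⟨n, j, hj, hle⟩ := hJ.exists_le_sup_of_notMem hbot hx
  have hanti : Antitone z := antitone_nat_of_succ_le fun n => ha.2 _ _ (hz n)
  set m := max n N
  have hm : r (z (m + 1)) (j ⊔ x) :=
    ha.1 _ _ _ _ le_rfl (hz m) ((hanti (le_max_left n N)).trans hle)
  -- split `z (m + 2) ≺ z (m + 1) ≺ j ⊔ x`; then `x'` escapes `J` because `z (m + 2)` does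
  obtain ⟨j', x', hj', hx', hcov, hle'⟩ := hd _ _ _ hm _ (hz (m + 1))
  refine ⟨x', hx', fun hx'J => ?_,
    (le_sup_right.trans hle').trans (hanti ((le_max_right n N).trans m.le_succ))⟩
  have hjx : j' ⊔ x' ∈ J := hJ.1.1.2 _ (hJ.1.1.1 j hj j' (ha.2 _ _ hj')) _ hx'J
  exact hJ.1.2 (m + 2) (hJ.1.1.1 _ hjx _ hcov)

omit [OrderBot S] hz hJ hbot in
theorem isIdl_setOf_forall_rel_le_imp_mem (hJ : IsIdl J)
    (hround : ∀ u ∉ J, ∃ u', r u' u ∧ u' ∉ J) (x : S) :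
    IsIdl {v | ∀ u, r u v → u ≤ x → u ∈ J} := by
  refine ⟨fun p hp q hq u hu hux => hp u (ha.1 _ _ _ _ le_rfl hu hq) hux, ?_⟩
  intro p hp q hq u hu hux
  by_contra huJ
  obtain ⟨u', hu', hu'J⟩ := hround u huJ
  obtain ⟨a, b, ha', hb', hcov, hle⟩ := hd _ _ _ hu _ hu'
  have haJ : a ∈ J := hp a ha' ((le_sup_left.trans hle).trans hux)
  have hbJ : b ∈ J := hq b hb' ((le_sup_right.trans hle).trans hux)
  exact hu'J (hJ.1 _ (hJ.2 a haJ b hbJ) u' hcov)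

theorem exists_le_le_notMem {x y : S} (hx : x ∉ J) (hy : y ∉ J) :
    ∃ t ∉ J, t ≤ x ∧ t ≤ y := by
  by_contra! h
  have hround : ∀ u ∉ J, ∃ u', r u' u ∧ u' ∉ J := fun u hu =>
    (exists_rel_notMem_le hd ha hz hJ hbot hu 0).imp fun _ h => ⟨h.1, h.2.1⟩
  -- this ideal contains `J` and `y`, so by maximality it meets the chain
  have hJx := isIdl_setOf_forall_rel_le_imp_mem hd ha hJ.1.1 hround x
  have hJJx : J ⊆ {v | ∀ u, r u v → u ≤ x → u ∈ J} :=
    fun v hv u hu _ => hJ.1.1.1 v hv u (ha.2 _ _ hu)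
  have hyJx : ∀ u, r u y → u ≤ x → u ∈ J :=
    fun u hu hux => by_contra fun huJ => h u huJ hux (ha.2 _ _ hu)
  obtain ⟨k, hk⟩ : ∃ k, ∀ u, r u (z k) → u ≤ x → u ∈ J := by
    by_contra! hk
    exact hy (hJ.2 ⟨hJx, fun n hn => (hk n).elim fun u hu => hu.2.2 (hn u hu.1 hu.2.1)⟩
      hJJx hyJx)
  obtain ⟨x', hx'x, hx'J, hx'z⟩ := exists_rel_notMem_le hd ha hz hJ hbot hx (k + 1)
  exact hx'J (hk x' (ha.1 _ _ _ _ hx'z (hz k) le_rfl) (ha.2 _ _ hx'x))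

theorem exists_spec_mem_iff_notMem : ∃ R : Spec r, ∀ s, s ∈ R.1 ↔ s ∉ J := by
  refine ⟨⟨Jᶜ, ⟨⟨z 0, hJ.1.2 0⟩, ?_, ?_⟩, ?_, ?_, not_not.2 hbot⟩, fun _ => Iff.rfl⟩
  · exact fun p hp q hpq hq => hp (hJ.1.1.1 q hq p hpq)
  · exact fun x hx y hy => exists_le_le_notMem hd ha hz hJ hbot hx hy
  · exact fun p hp => (exists_rel_notMem_le hd ha hz hJ hbot hp 0).imp fun _ h => ⟨h.2.1, h.1⟩
  · exact fun a b hab => not_and_or.1 fun h => hab (hJ.1.1.2 a h.1 b h.2)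

end MaximalAvoiding

theorem isCompact_iInter_basicOpen {r : S → S → Prop} (hd : IsDistrib r) (ha : IsAux r)
    {z : ℕ → S} (hz : ∀ n, r (z (n + 1)) (z n)) : IsCompact (⋂ n, basicOpen r (z n)) := by
  refine isCompact_generateFrom rfl fun 𝒰 h𝒰 hcov => ?_
  set A : Set S := {a | ∃ F : Finset S, (∀ b ∈ F, basicOpen r b ∈ 𝒰) ∧ a ≤ F.sup id}
  by_cases hzA : ∃ n, z n ∈ A
  · obtain ⟨n, F, hF𝒰, hzF⟩ := hzA
    refine ⟨basicOpen r '' F, image_subset_iff.2 hF𝒰, F.finite_toSet.image _, fun R hR => ?_⟩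
    obtain ⟨b, hbF, hbR⟩ := R.2.2.2.1.exists_mem_of_finset_sup_mem R.2.2.2.2 F
      (R.2.1.2.1 _ (mem_iInter.1 hR n) _ hzF)
    exact ⟨basicOpen r b, mem_image_of_mem _ hbF, hbR⟩
  · push Not at hzA
    have hA : IsIdlAvoiding z A := by
      refine ⟨⟨fun p ⟨F, hF, hp⟩ q hq => ⟨F, hF, hq.trans hp⟩, ?_⟩, hzA⟩
      rintro p ⟨F₁, hF₁, hp⟩ q ⟨F₂, hF₂, hq⟩
      classical
      refine ⟨F₁ ∪ F₂, fun b hb => (Finset.mem_union.1 hb).elim (hF₁ b) (hF₂ b), ?_⟩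
      rw [Finset.sup_union]
      exact sup_le_sup hp hq
    obtain ⟨J, hAJ, hJ⟩ := exists_maximal_isIdlAvoiding hA
    obtain ⟨R, hR⟩ := exists_spec_mem_iff_notMem hd ha hz hJ (hAJ ⟨∅, by simp, by simp⟩)
    obtain ⟨_, hU, hRU⟩ := hcov (mem_iInter.2 fun n => (hR _).2 (hJ.1.2 n))
    obtain ⟨b, rfl⟩ := h𝒰 hU
    exact absurd (hAJ ⟨{b}, by simpa using hU, by simp⟩) ((hR b).1 hRU)

theorem locallyCompactSpace_spec {r : S → S → Prop} (hd : IsDistrib r) (ha : IsAux r)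
    (hi : IsInterp r) : LocallyCompactSpace (Spec r) := by
  refine ⟨fun P U hU => ?_⟩
  obtain ⟨_, ⟨p, rfl⟩, hPp, hpU⟩ := (isTopologicalBasis_basicOpen r).mem_nhds_iff.1 hU
  obtain ⟨q, hqP, hqp⟩ := P.2.2.1 p hPp
  obtain ⟨z, rfl, hz⟩ := hi.exists_rel_seq hqp
  have hq : basicOpen r q ∈ nhds P :=
    ((isTopologicalBasis_basicOpen r).isOpen ⟨q, rfl⟩).mem_nhds hqP
  refine ⟨⋂ n, basicOpen r (z n), ?_, (iInter_subset _ 0).trans hpU,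
    isCompact_iInter_basicOpen hd ha fun n => (hz n).1⟩
  exact Filter.mem_of_superset hq (subset_iInter fun n => basicOpen_mono r (ha.2 _ _ (hz n).2))

theorem coreCompact_of_locallyCompactSpace (X : Type*) [TopologicalSpace X]
    [LocallyCompactSpace X] : CoreCompact X := by
  intro x U hU hxU
  obtain ⟨C, hCx, hCU, hC⟩ := local_compact_nhds (hU.mem_nhds hxU)
  refine ⟨interior C, isOpen_interior, mem_interior_iff_mem_nhds.2 hCx, fun 𝒞 h𝒞 hcov => ?_⟩
  obtain ⟨F, hF𝒞, hF, hCF⟩ := hC.elim_finite_subcover_image (c := fun V => V) h𝒞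
    (sUnion_eq_biUnion ▸ hCU.trans hcov)
  exact ⟨F, hF𝒞, hF, sUnion_eq_biUnion ▸ interior_subset.trans hCF⟩

theorem stmt11 (r : S → S → Prop) (hd : IsDistrib r) (ha : IsAux r) (hi : IsInterp r) :
    CoreCompact (Spec r) ∧
      ∀ (P : Spec r) (U : Set (Spec r)), IsOpen U → P ∈ U →
        ∃ C, IsCompact C ∧ C ∈ nhds P ∧ C ⊆ U := by
  have := locallyCompactSpace_spec hd ha hi
  refine ⟨coreCompact_of_locallyCompactSpace _, fun P U hU hPU => ?_⟩
  obtain ⟨C, hCP, hCU, hC⟩ := local_compact_nhds (hU.mem_nhds hPU)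
  exact ⟨C, hC, hCP, hCU⟩
end
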